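/- There exists a constant c > 0 such that for every T > 0, every finite (bounded) Radon measure ν on [0,∞) and every finite Radon measure μ on [0,T), the function v_{ν,μ}(t,x) = ∫_{[0,∞)} Ẽ(t,x,y) dν(y) + 2∫_{[0,t)} E(t−s,x) dμ(s) satisfies the Marcinkiewicz-type estimates: ∫∫_G |v_{ν,μ}(t,x)| dx dt ≤ c (‖ν‖ + ‖μ‖) |G|^{2/3} for every Borel set G ⊂ (0,T)×(0,∞) of finite measure, and ∫_F |v_{ν,μ}(t,0)| dt ≤ c (‖ν‖ + ‖μ‖) |F|^{1/2} for every Borel set F ⊂ (0,T) of finite measure, where ‖·‖ denotes the total variation of the measure. Equivalently, v_{ν,μ} belongs to the Marcinkiewicz space M³((0,T)×(0,∞)) and its boundary trace v_{ν,μ}(·,0) to M²(0,T), with norms bounded by c(‖ν‖ + ‖μ‖). -/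

import Mathlib

/-! By the triangle inequality, `|v|` is dominated by the superposition, against `ν` and `μ`,
of translates `E(t - a, x - b)` of the heat kernel, so by Tonelli it suffices to bound the integral
of one translate over `G` (resp. `F`) uniformly in the source point `(a, b)`. Split at a time
scale `τ`: for `0 < t - a ≤ τ` every time slice of the kernel has mass one in `x` (on the
boundary, `∫ (t - a)^{-1/2} dt = 2√τ`), while for `t - a > τ` the kernel is at most `τ^{-1/2}`.
Hence `∫_G ≤ τ + τ^{-1/2} |G|` and `∫_F ≤ 2√τ + τ^{-1/2} |F|`, and `τ = |G|^{2/3}`, resp.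
`τ = |F|`, gives `2 |G|^{2/3}` and `3 |F|^{1/2}`. -/

open MeasureTheory Real Set

/-- The one-dimensional Gaussian heat kernel `E(t,x) = (4πt)^{−1/2} e^{−x²/(4t)}`
(extended by `0` for `t ≤ 0`). -/
noncomputable def heatE (t x : ℝ) : ℝ :=
  if 0 < t then (Real.sqrt (4 * π * t))⁻¹ * Real.exp (-(x ^ 2) / (4 * t)) else 0

/-- `Ẽ(t,x,y) = E(t,x−y) + E(t,x+y)`. -/
noncomputable def heatEtil (t x y : ℝ) : ℝ := heatE t (x - y) + heatE t (x + y)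

/-- The solution `v_{ν,μ}` of the heat equation on `(0,T)×(0,∞)` with boundary
flux `−v_x(·,0) = μ` and initial datum `ν`. -/
noncomputable def vSol (ν μ : Measure ℝ) (t x : ℝ) : ℝ :=
  (∫ y, heatEtil t x y ∂ν) + 2 * ∫ s in Iio t, heatE (t - s) x ∂μ

open ProbabilityTheory
open scoped ENNReal

theorem heatE_nonneg (t x : ℝ) : 0 ≤ heatE t x := by
  unfold heatE; split_ifs <;> positivity

theorem heatE_of_nonpos {t : ℝ} (ht : t ≤ 0) (x : ℝ) : heatE t x = 0 :=
  if_neg ht.not_gt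

@[fun_prop]
theorem Measurable.heatE {α : Type*} [MeasurableSpace α] {f g : α → ℝ} (hf : Measurable f)
    (hg : Measurable g) : Measurable fun p => heatE (f p) (g p) :=
  Measurable.ite (measurableSet_lt measurable_const hf) (by fun_prop) measurable_const

theorem heatE_sub_eq_gaussianPDFReal {t : ℝ} (ht : 0 < t) (x b : ℝ) :
    heatE t (x - b) = gaussianPDFReal b (2 * t).toNNReal x := by
  rw [heatE, if_pos ht, gaussianPDFReal, Real.coe_toNNReal _ (by positivity)]
  ring_nf

theorem lintegral_heatE_sub {t : ℝ} (ht : 0 < t) (b : ℝ) :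
    ∫⁻ x, ENNReal.ofReal (heatE t (x - b)) = 1 := by
  simp_rw [heatE_sub_eq_gaussianPDFReal ht]
  exact lintegral_gaussianPDFReal_eq_one b (by simpa using ht)

theorem heatE_le_inv_sqrt (t x : ℝ) : heatE t x ≤ (√t)⁻¹ := by
  rcases le_or_gt t 0 with ht | ht
  · simp [heatE_of_nonpos ht, Real.sqrt_eq_zero'.2 ht]
  have hexp : exp (-(x ^ 2) / (4 * t)) ≤ 1 := exp_le_one_iff.2 (by
    apply div_nonpos_of_nonpos_of_nonneg <;> nlinarith [sq_nonneg x])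
  calc heatE t x ≤ (√(4 * π * t))⁻¹ * 1 := by
        rw [heatE, if_pos ht]; gcongr
    _ ≤ (√t)⁻¹ := by
        rw [mul_one]; gcongr; nlinarith [pi_gt_three]

theorem heatE_le_inv_sqrt_of_notMem_Ioo {τ t : ℝ} (hτ : 0 < τ) (ht : t ∉ Ioo 0 τ) (x : ℝ) :
    heatE t x ≤ (√τ)⁻¹ := by
  rcases le_or_gt t 0 with h0 | h0
  · rw [heatE_of_nonpos h0]; positivity
  · have hτt : τ ≤ t := le_of_not_gt fun h => ht ⟨h0, h⟩
    exact (heatE_le_inv_sqrt t x).trans (by gcongr)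

theorem setLIntegral_le_add_mul_of_le_on_sdiff {α : Type*} [MeasurableSpace α] {ρ : Measure α}
    {f : α → ℝ≥0∞} {s S : Set α} {c : ℝ≥0∞} (hc : ∀ x ∈ s \ S, f x ≤ c) :
    ∫⁻ x in s, f x ∂ρ ≤ ∫⁻ x in S, f x ∂ρ + c * ρ s :=
  calc ∫⁻ x in s, f x ∂ρ ≤ ∫⁻ x in s ∩ S, f x ∂ρ + ∫⁻ x in s \ S, f x ∂ρ := by
        conv_lhs => rw [← inter_union_sdiff s S]
        exact lintegral_union_le _ _ _
    _ ≤ ∫⁻ x in S, f x ∂ρ + ∫⁻ _ in s \ S, c ∂ρ :=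
        add_le_add (lintegral_mono_set inter_subset_right) (setLIntegral_mono measurable_const hc)
    _ ≤ ∫⁻ x in S, f x ∂ρ + c * ρ s := by
        rw [setLIntegral_const]; gcongr; exact sdiff_subset

theorem setLIntegral_le_mul_measure_rpow {α : Type*} [MeasurableSpace α] {ρ : Measure α}
    {f : α → ℝ≥0∞} {s : Set α} {C : ℝ≥0∞} {p : ℝ} (hC : C ≠ 0) (hp : 0 < p)
    (h : ∀ M : ℝ, 0 < M → ρ s = ENNReal.ofReal M →
      ∫⁻ x in s, f x ∂ρ ≤ C * ENNReal.ofReal (M ^ p)) :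
    ∫⁻ x in s, f x ∂ρ ≤ C * ρ s ^ p := by
  rcases eq_or_ne (ρ s) ⊤ with htop | hfin
  · simp [htop, ENNReal.top_rpow_of_pos hp, hC]
  rcases eq_or_ne (ρ s) 0 with h0 | hne
  · simp [Measure.restrict_eq_zero.2 h0]
  have hM := ENNReal.toReal_pos hne hfin
  rw [← ENNReal.ofReal_toReal hfin, ENNReal.ofReal_rpow_of_pos hM]
  exact h _ hM (ENNReal.ofReal_toReal hfin).symm

theorem lintegral_lintegral_le_measure_univ_mul {α β : Type*} [MeasurableSpace α]
    [MeasurableSpace β] {ρ : Measure α} [SFinite ρ] {ν : Measure β} [SFinite ν]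
    {f : α → β → ℝ≥0∞} (hf : AEMeasurable (Function.uncurry f) (ρ.prod ν)) {K : ℝ≥0∞}
    (hK : ∀ y, ∫⁻ x, f x y ∂ρ ≤ K) :
    ∫⁻ x, ∫⁻ y, f x y ∂ν ∂ρ ≤ ν univ * K := by
  rw [lintegral_lintegral_swap hf]
  calc ∫⁻ y, ∫⁻ x, f x y ∂ρ ∂ν ≤ ∫⁻ _, K ∂ν := lintegral_mono hK
    _ = ν univ * K := by rw [lintegral_const, mul_comm]

theorem setLIntegral_heatE_Ioc_prod_univ (a b τ : ℝ) :
    ∫⁻ q in Ioc a (a + τ) ×ˢ univ, ENNReal.ofReal (heatE (q.1 - a) (q.2 - b)) =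
      ENNReal.ofReal τ := by
  rw [Measure.volume_eq_prod, setLIntegral_prod _ (by fun_prop), Measure.restrict_univ,
    setLIntegral_congr_fun measurableSet_Ioc fun t ht => lintegral_heatE_sub (sub_pos.2 ht.1) b]
  simp

theorem setLIntegral_rpow_sub_Ioc (a : ℝ) {τ : ℝ} (hτ : 0 ≤ τ) :
    ∫⁻ t in Ioc a (a + τ), ENNReal.ofReal ((t - a) ^ (-(1 / 2) : ℝ)) = ENNReal.ofReal (2 * √τ) := by
  have hint : IntervalIntegrable (fun t => (t - a) ^ (-(1 / 2) : ℝ)) volume a (a + τ) := by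
    simpa [add_comm] using (intervalIntegral.intervalIntegrable_rpow' (a := 0) (b := τ)
      (r := -(1 / 2)) (by norm_num)).comp_sub_right a
  rw [← ofReal_integral_eq_lintegral_ofReal
    ((intervalIntegrable_iff_integrableOn_Ioc_of_le (by linarith)).1 hint)
    ((ae_restrict_iff' measurableSet_Ioc).2 (ae_of_all _ fun t ht => by
      have := ht.1; positivity)), ← intervalIntegral.integral_of_le (by linarith),
    intervalIntegral.integral_comp_sub_right (fun t => t ^ (-(1 / 2) : ℝ)), sub_self,
    add_sub_cancel_left, integral_rpow (Or.inl (by norm_num)), Real.sqrt_eq_rpow]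
  congr 1
  norm_num
  ring

theorem setLIntegral_heatE_sub_sub_le_add (a b : ℝ) {τ : ℝ} (hτ : 0 < τ) (G : Set (ℝ × ℝ)) :
    ∫⁻ q in G, ENNReal.ofReal (heatE (q.1 - a) (q.2 - b)) ≤
      ENNReal.ofReal τ + ENNReal.ofReal (√τ)⁻¹ * volume G := by
  rw [← setLIntegral_heatE_Ioc_prod_univ a b τ]
  refine setLIntegral_le_add_mul_of_le_on_sdiff fun q hq => ENNReal.ofReal_le_ofReal
    (heatE_le_inv_sqrt_of_notMem_Ioo hτ (fun h => hq.2 ⟨⟨?_, ?_⟩, mem_univ _⟩) _)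
  · linarith [h.1]
  · linarith [h.2]

theorem setLIntegral_heatE_sub_sub_le (a b : ℝ) (G : Set (ℝ × ℝ)) :
    ∫⁻ q in G, ENNReal.ofReal (heatE (q.1 - a) (q.2 - b)) ≤ 2 * volume G ^ (2 / 3 : ℝ) := by
  refine setLIntegral_le_mul_measure_rpow two_ne_zero (by norm_num) fun M hM hG => ?_
  have hτ : 0 < M ^ (2 / 3 : ℝ) := by positivity
  have hsqrt : √(M ^ (2 / 3 : ℝ)) = M ^ (1 / 3 : ℝ) := by
    rw [Real.sqrt_eq_rpow, ← Real.rpow_mul hM.le]; norm_num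
  have hkey : (M ^ (1 / 3 : ℝ))⁻¹ * M = M ^ (2 / 3 : ℝ) := by
    rw [← Real.rpow_neg hM.le]
    nth_rw 2 [← Real.rpow_one M]
    rw [← Real.rpow_add hM]
    norm_num
  calc _ ≤ ENNReal.ofReal (M ^ (2 / 3 : ℝ)) + ENNReal.ofReal (√(M ^ (2 / 3 : ℝ)))⁻¹ * volume G :=
        setLIntegral_heatE_sub_sub_le_add a b hτ G
    _ = 2 * ENNReal.ofReal (M ^ (2 / 3 : ℝ)) := by
        rw [hG, hsqrt, ← ENNReal.ofReal_mul (by positivity), hkey, two_mul]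

theorem setLIntegral_heatE_sub_le_add (a x : ℝ) {τ : ℝ} (hτ : 0 < τ) (F : Set ℝ) :
    ∫⁻ t in F, ENNReal.ofReal (heatE (t - a) x) ≤
      ENNReal.ofReal (2 * √τ) + ENNReal.ofReal (√τ)⁻¹ * volume F := by
  refine (setLIntegral_le_add_mul_of_le_on_sdiff (S := Ioc a (a + τ)) fun t ht =>
    ENNReal.ofReal_le_ofReal (heatE_le_inv_sqrt_of_notMem_Ioo hτ
      (fun h => ht.2 ⟨by linarith [h.1], by linarith [h.2]⟩) _)).trans (add_le_add_left ?_ _)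
  rw [← setLIntegral_rpow_sub_Ioc a hτ.le]
  refine setLIntegral_mono' measurableSet_Ioc fun t ht => ENNReal.ofReal_le_ofReal ?_
  have hta : 0 ≤ t - a := by linarith [ht.1]
  calc heatE (t - a) x ≤ (√(t - a))⁻¹ := heatE_le_inv_sqrt _ _
    _ = (t - a) ^ (-(1 / 2) : ℝ) := by rw [Real.sqrt_eq_rpow, Real.rpow_neg hta]

theorem setLIntegral_heatE_sub_le (a x : ℝ) (F : Set ℝ) :
    ∫⁻ t in F, ENNReal.ofReal (heatE (t - a) x) ≤ 3 * volume F ^ (1 / 2 : ℝ) := by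
  refine setLIntegral_le_mul_measure_rpow three_ne_zero (by norm_num) fun M hM hF => ?_
  calc _ ≤ ENNReal.ofReal (2 * √M) + ENNReal.ofReal (√M)⁻¹ * volume F :=
        setLIntegral_heatE_sub_le_add a x hM F
    _ = 3 * ENNReal.ofReal (M ^ (1 / 2 : ℝ)) := by
        have hkey : (√M)⁻¹ * M = √M := by
          field_simp
          exact (Real.sq_sqrt hM.le).symm
        rw [hF, ← ENNReal.ofReal_mul (by positivity), hkey,
          ← ENNReal.ofReal_add (by positivity) (by positivity), ← Real.sqrt_eq_rpow,
          ← ENNReal.ofReal_ofNat 3, ← ENNReal.ofReal_mul (by norm_num)]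
        ring_nf

theorem enorm_vSol_le (ν μ : Measure ℝ) (t x : ℝ) :
    ‖vSol ν μ t x‖ₑ ≤
      ∫⁻ y, ENNReal.ofReal (heatE t (x - y)) + ENNReal.ofReal (heatE t (x + y)) ∂ν +
        2 * ∫⁻ s, ENNReal.ofReal (heatE (t - s) x) ∂μ := by
  have hE : ∀ t x, ‖heatE t x‖ₑ = ENNReal.ofReal (heatE t x) := fun t x =>
    Real.enorm_of_nonneg (heatE_nonneg t x)
  refine enorm_add_le _ _ |>.trans (add_le_add ?_ ?_)
  · refine (enorm_integral_le_lintegral_enorm _).trans (lintegral_mono fun y => ?_)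
    simpa only [heatEtil, hE] using enorm_add_le (heatE t (x - y)) (heatE t (x + y))
  · rw [enorm_mul, Real.enorm_of_nonneg zero_le_two, ENNReal.ofReal_ofNat]
    gcongr
    refine (enorm_integral_le_lintegral_enorm _).trans ?_
    simpa only [hE] using setLIntegral_le_lintegral _ _

theorem lintegral_enorm_vSol_le {α : Type*} [MeasurableSpace α] (ρ : Measure α) [SFinite ρ]
    (ν μ : Measure ℝ) [SFinite ν] [SFinite μ] {t x : α → ℝ} (ht : Measurable t)
    (hx : Measurable x) {K : ℝ≥0∞}
    (hK : ∀ a b, ∫⁻ p, ENNReal.ofReal (heatE (t p - a) (x p - b)) ∂ρ ≤ K) :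
    ∫⁻ p, ‖vSol ν μ (t p) (x p)‖ₑ ∂ρ ≤ 2 * (ν univ + μ univ) * K := by
  have hν : ∫⁻ p, ∫⁻ y, ENNReal.ofReal (heatE (t p) (x p - y)) +
      ENNReal.ofReal (heatE (t p) (x p + y)) ∂ν ∂ρ ≤ ν univ * (K + K) := by
    refine lintegral_lintegral_le_measure_univ_mul (by fun_prop) fun y => ?_
    rw [lintegral_add_left (by fun_prop)]
    gcongr
    · simpa using hK 0 y
    · simpa using hK 0 (-y)
  have hμ : ∫⁻ p, ∫⁻ s, ENNReal.ofReal (heatE (t p - s) (x p)) ∂μ ∂ρ ≤ μ univ * K :=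
    lintegral_lintegral_le_measure_univ_mul (by fun_prop) fun s => by simpa using hK s 0
  calc ∫⁻ p, ‖vSol ν μ (t p) (x p)‖ₑ ∂ρ
      ≤ ∫⁻ p, (∫⁻ y, ENNReal.ofReal (heatE (t p) (x p - y)) +
          ENNReal.ofReal (heatE (t p) (x p + y)) ∂ν) +
          2 * ∫⁻ s, ENNReal.ofReal (heatE (t p - s) (x p)) ∂μ ∂ρ :=
        lintegral_mono fun p => enorm_vSol_le ν μ (t p) (x p)
    _ = (∫⁻ p, ∫⁻ y, ENNReal.ofReal (heatE (t p) (x p - y)) +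
          ENNReal.ofReal (heatE (t p) (x p + y)) ∂ν ∂ρ) +
          2 * ∫⁻ p, ∫⁻ s, ENNReal.ofReal (heatE (t p - s) (x p)) ∂μ ∂ρ := by
        rw [lintegral_add_right _ (by fun_prop), lintegral_const_mul _ (by fun_prop)]
    _ ≤ ν univ * (K + K) + 2 * (μ univ * K) := by gcongr
    _ = 2 * (ν univ + μ univ) * K := by ring

theorem marcinkiewicz_estimates :
    ∃ c : ℝ, 0 < c ∧
      ∀ T : ℝ, 0 < T → ∀ ν μ : Measure ℝ,
        IsFiniteMeasure ν → IsFiniteMeasure μ →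
        ν (Iio 0) = 0 → μ (Iio 0) = 0 → μ (Ici T) = 0 →
        (∀ G : Set (ℝ × ℝ), MeasurableSet G → G ⊆ Ioo 0 T ×ˢ Ioi 0 →
          (∫⁻ q in G, ENNReal.ofReal |vSol ν μ q.1 q.2| ∂(volume : Measure (ℝ × ℝ)))
            ≤ ENNReal.ofReal (c * ((ν univ).toReal + (μ univ).toReal))
                * (volume G) ^ ((2:ℝ) / 3)) ∧
        (∀ F : Set ℝ, MeasurableSet F → F ⊆ Ioo 0 T →
          (∫⁻ t in F, ENNReal.ofReal |vSol ν μ t 0|)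
            ≤ ENNReal.ofReal (c * ((ν univ).toReal + (μ univ).toReal))
                * (volume F) ^ ((1:ℝ) / 2)) := by
  refine ⟨6, by norm_num, fun T _ ν μ _ _ _ _ _ => ?_⟩
  have hc : ENNReal.ofReal (6 * ((ν univ).toReal + (μ univ).toReal)) = 6 * (ν univ + μ univ) := by
    rw [ENNReal.ofReal_mul (by norm_num), ENNReal.ofReal_add ENNReal.toReal_nonneg
      ENNReal.toReal_nonneg, ENNReal.ofReal_toReal (measure_ne_top ν univ),
      ENNReal.ofReal_toReal (measure_ne_top μ univ), ENNReal.ofReal_ofNat]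
  simp only [← Real.enorm_eq_ofReal_abs, hc]
  refine ⟨fun G _ _ => ?_, fun F _ _ => ?_⟩
  · calc _ ≤ 2 * (ν univ + μ univ) * (2 * volume G ^ (2 / 3 : ℝ)) :=
          lintegral_enorm_vSol_le _ ν μ measurable_fst measurable_snd
            fun a b => setLIntegral_heatE_sub_sub_le a b G
      _ = 4 * (ν univ + μ univ) * volume G ^ (2 / 3 : ℝ) := by ring
      _ ≤ _ := by gcongr; norm_num
  · calc _ ≤ 2 * (ν univ + μ univ) * (3 * volume F ^ (1 / 2 : ℝ)) :=
          lintegral_enorm_vSol_le _ ν μ measurable_id measurable_const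
            fun a b => setLIntegral_heatE_sub_le a (0 - b) F
      _ = _ := by ring
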